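/- Let A ⊆ ℝ^k be a measurable set of finite positive Lebesgue measure and let à ⊆ A be a measurable subset of positive measure. Let h₀, M, p₀, C, ε > 0 and let P : A × (0, h₀) → ℂ be such that a ↦ P(a, h) is measurable for each h and |P(a, h)| ≤ M for all (a, h). Assume: (i) for all a ∈ à and h ∈ (0, h₀), Re P(a, h) ≥ p₀ and |Im P(a, h)| ≤ C · h^{1/2 + ε}; (ii) sup_{a ∈ A ∖ Ã} |P(a, h)| → 0 as h → 0⁺. Define R(h) = ∫_A P(a, h) · exp(−(Im P(a, h))²/h) da. Then Im R(h) → 0 as h → 0⁺, and liminf_{h → 0⁺} Re R(h) ≥ p₀ · μ(Ã) > 0; in particular, for all sufficiently small h > 0, R(h) satisfies the real dominance conditions Re R(h) > 0 and Re R(h) >> Im R(h) (i.e. Im R(h)/Re R(h) → 0). -/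

import Mathlib

/-!
Split `R(h)` into the integrals over `Ã` and over `A ∖ Ã`. The Gaussian weight
`exp (-(Im P)² / h)` lies in `(0, 1]`, so it never increases `|P|` or `|Im P|`; on `Ã` it is at
least `exp (-C² h^(2ε))`, which tends to `1` because `ε > 0`. Hence, up to the error
`sup_{A ∖ Ã} |P| · μ(A ∖ Ã) → 0`, the imaginary part of `R(h)` is `O(h^(1/2+ε))` and its real
part is at least `p₀ μ(Ã) (1 - o(1))`. Dividing the first bound by the second gives
`Im R / Re R → 0`.
-/

open Filter Topology MeasureTheory

/-- `R h = ∫ a in A, imDamp h (P a h)`. -/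
noncomputable def imDamp (h : ℝ) (z : ℂ) : ℂ := Real.exp (-z.im ^ 2 / h) • z

section imDamp

variable {h : ℝ}

theorem continuous_imDamp (h : ℝ) : Continuous (imDamp h) := by
  unfold imDamp; fun_prop

theorem exp_neg_sq_div_le_one (hh : 0 ≤ h) (y : ℝ) : Real.exp (-y ^ 2 / h) ≤ 1 :=
  Real.exp_le_one_iff.2 (div_nonpos_of_nonpos_of_nonneg (neg_nonpos.2 (sq_nonneg y)) hh)

theorem norm_imDamp_le (hh : 0 ≤ h) (z : ℂ) : ‖imDamp h z‖ ≤ ‖z‖ := by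
  rw [imDamp, norm_smul, Real.norm_of_nonneg (Real.exp_pos _).le]
  exact mul_le_of_le_one_left (norm_nonneg z) (exp_neg_sq_div_le_one hh _)

theorem abs_im_imDamp_le (hh : 0 ≤ h) (z : ℂ) : |(imDamp h z).im| ≤ |z.im| := by
  rw [imDamp, Complex.smul_im, smul_eq_mul, abs_mul, abs_of_pos (Real.exp_pos _)]
  exact mul_le_of_le_one_left (abs_nonneg _) (exp_neg_sq_div_le_one hh _)

theorem exp_neg_sq_div_mul_le_re_imDamp {p δ : ℝ} {z : ℂ} (hh : 0 < h) (hp : 0 ≤ p)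
    (hre : p ≤ z.re) (him : |z.im| ≤ δ) : Real.exp (-δ ^ 2 / h) * p ≤ (imDamp h z).re := by
  rw [imDamp, Complex.smul_re, smul_eq_mul]
  have hsq : z.im ^ 2 ≤ δ ^ 2 := sq_le_sq' (abs_le.1 him).1 (abs_le.1 him).2
  have hexp : Real.exp (-δ ^ 2 / h) ≤ Real.exp (-z.im ^ 2 / h) := by
    gcongr
  exact mul_le_mul hexp hre hp (Real.exp_pos _).le

end imDamp

theorem tendsto_mul_rpow_nhdsGT_zero (C : ℝ) {y : ℝ} (hy : 0 < y) :
    Tendsto (fun h : ℝ => C * h ^ y) (𝓝[>] 0) (𝓝 0) := by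
  simpa [Real.zero_rpow hy.ne'] using
    ((Real.continuousAt_rpow_const 0 y (Or.inr hy.le)).tendsto.mono_left
      nhdsWithin_le_nhds).const_mul C

theorem tendsto_exp_neg_sq_mul_rpow_div_nhdsGT_zero (C : ℝ) {ε : ℝ} (hε : 0 < ε) :
    Tendsto (fun h : ℝ => Real.exp (-(C * h ^ ((1 : ℝ) / 2 + ε)) ^ 2 / h)) (𝓝[>] 0) (𝓝 1) := by
  have hsq : Tendsto (fun h : ℝ => (C * h ^ ((1 : ℝ) / 2 + ε)) ^ 2 / h) (𝓝[>] 0) (𝓝 0) := by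
    refine (tendsto_mul_rpow_nhdsGT_zero (C ^ 2) (by positivity : 0 < 2 * ε)).congr'
      (eventually_nhdsWithin_of_forall fun h (hh : 0 < h) => ?_)
    dsimp only
    rw [mul_pow, ← Real.rpow_natCast (h ^ _), ← Real.rpow_mul hh.le, mul_div_assoc,
      ← Real.rpow_sub_one hh.ne']
    ring_nf
  simpa only [Function.comp_def, neg_div, neg_zero, Real.exp_zero] using
    (Real.continuous_exp.tendsto _).comp hsq.neg

section split

variable {α : Type*} [MeasurableSpace α] {μ : Measure α} {f : α → ℂ} {A T : Set α} {η : ℝ}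

theorem setIntegral_eq_add_sdiff (hT : MeasurableSet T) (hTA : T ⊆ A)
    (hf : IntegrableOn f A μ) :
    ∫ a in A, f a ∂μ = ∫ a in T, f a ∂μ + ∫ a in A \ T, f a ∂μ := by
  rw [setIntegral_sdiff hT hf hTA, add_sub_cancel]

theorem abs_im_setIntegral_le {δ : ℝ} (hTfin : μ T < ⊤) (hf : IntegrableOn f T μ)
    (him : ∀ a ∈ T, |(f a).im| ≤ δ) : |(∫ a in T, f a ∂μ).im| ≤ δ * μ.real T := by
  rw [← Complex.imCLM_apply, ← ContinuousLinearMap.integral_comp_comm _ hf]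
  exact norm_setIntegral_le_of_norm_le_const hTfin fun a ha =>
    (Real.norm_eq_abs _).trans_le (him a ha)

theorem le_re_setIntegral {c : ℝ} (hT : MeasurableSet T) (hTfin : μ T < ⊤)
    (hf : IntegrableOn f T μ) (hre : ∀ a ∈ T, c ≤ (f a).re) :
    c * μ.real T ≤ (∫ a in T, f a ∂μ).re := by
  rw [← Complex.reCLM_apply, ← ContinuousLinearMap.integral_comp_comm _ hf]
  exact setIntegral_ge_of_const_le_real hT hTfin.ne hre hf.re

theorem abs_im_setIntegral_le_add (hT : MeasurableSet T) (hTA : T ⊆ A) (hAfin : μ A < ⊤)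
    (hf : IntegrableOn f A μ) {δ : ℝ} (him : ∀ a ∈ T, |(f a).im| ≤ δ)
    (hη : ∀ a ∈ A \ T, ‖f a‖ ≤ η) :
    |(∫ a in A, f a ∂μ).im| ≤ δ * μ.real T + η * μ.real (A \ T) := by
  rw [setIntegral_eq_add_sdiff hT hTA hf, Complex.add_im]
  refine (abs_add_le _ _).trans (add_le_add ?_ ?_)
  · exact abs_im_setIntegral_le ((measure_mono hTA).trans_lt hAfin) (hf.mono_set hTA) him
  · exact (Complex.abs_im_le_norm _).trans
      (norm_setIntegral_le_of_norm_le_const ((measure_mono Set.sdiff_subset).trans_lt hAfin) hη)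

theorem le_re_setIntegral_sub (hT : MeasurableSet T) (hTA : T ⊆ A) (hAfin : μ A < ⊤)
    (hf : IntegrableOn f A μ) {c : ℝ} (hre : ∀ a ∈ T, c ≤ (f a).re)
    (hη : ∀ a ∈ A \ T, ‖f a‖ ≤ η) :
    c * μ.real T - η * μ.real (A \ T) ≤ (∫ a in A, f a ∂μ).re := by
  rw [setIntegral_eq_add_sdiff hT hTA hf, Complex.add_re]
  have hTpart := le_re_setIntegral hT ((measure_mono hTA).trans_lt hAfin) (hf.mono_set hTA) hre
  have hrest := (Complex.abs_re_le_norm _).trans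
      (norm_setIntegral_le_of_norm_le_const ((measure_mono Set.sdiff_subset).trans_lt hAfin) hη)
  linarith [neg_abs_le (∫ a in A \ T, f a ∂μ).re]

end split

theorem integral_imDamp_bounds {α : Type*} [MeasurableSpace α] {μ : Measure α} {f : α → ℂ}
    {A T : Set α} {h M p δ η : ℝ} (hA : MeasurableSet A) (hAfin : μ A < ⊤)
    (hT : MeasurableSet T) (hTA : T ⊆ A) (hh : 0 < h) (hp : 0 ≤ p) (hf : Measurable f)
    (hM : ∀ a ∈ A, ‖f a‖ ≤ M) (hdom : ∀ a ∈ T, p ≤ (f a).re ∧ |(f a).im| ≤ δ)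
    (hη : ∀ a ∈ A \ T, ‖f a‖ ≤ η) :
    |(∫ a in A, imDamp h (f a) ∂μ).im| ≤ δ * μ.real T + η * μ.real (A \ T) ∧
    Real.exp (-δ ^ 2 / h) * p * μ.real T - η * μ.real (A \ T) ≤
      (∫ a in A, imDamp h (f a) ∂μ).re ∧
    (∫ a in A, imDamp h (f a) ∂μ).re ≤ M * μ.real A := by
  have hle : ∀ a, ‖imDamp h (f a)‖ ≤ ‖f a‖ := fun a => norm_imDamp_le hh.le (f a)
  have hint : IntegrableOn (fun a => imDamp h (f a)) A μ :=
    Measure.integrableOn_of_bounded hAfin.ne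
      ((continuous_imDamp h).measurable.comp hf).aestronglyMeasurable
      ((ae_restrict_mem hA).mono fun a ha => (hle a).trans (hM a ha))
  refine ⟨?_, ?_, ?_⟩
  · exact abs_im_setIntegral_le_add hT hTA hAfin hint
      (fun a ha => (abs_im_imDamp_le hh.le _).trans (hdom a ha).2)
      (fun a ha => (hle a).trans (hη a ha))
  · exact le_re_setIntegral_sub hT hTA hAfin hint
      (fun a ha => exp_neg_sq_div_mul_le_re_imDamp hh hp (hdom a ha).1 (hdom a ha).2)
      (fun a ha => (hle a).trans (hη a ha))
  · exact (Complex.re_le_norm _).trans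
      (norm_setIntegral_le_of_norm_le_const hAfin fun a ha => (hle a).trans (hM a ha))

theorem le_liminf_of_tendsto_of_eventually_le {ι : Type*} {l : Filter ι} [l.NeBot]
    {g u : ι → ℝ} {L K : ℝ} (hg : Tendsto g l (𝓝 L)) (hgu : ∀ᶠ i in l, g i ≤ u i)
    (huK : ∀ᶠ i in l, u i ≤ K) : L ≤ liminf u l := by
  rw [← hg.liminf_eq]
  exact liminf_le_liminf hgu hg.isBoundedUnder_ge (isCoboundedUnder_ge_of_eventually_le l huK)

theorem tendsto_div_of_tendsto_zero_of_eventually_le {ι : Type*} {l : Filter ι} {u v : ι → ℝ}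
    {c : ℝ} (hc : 0 < c) (hu : Tendsto u l (𝓝 0)) (hv : ∀ᶠ i in l, c ≤ v i) :
    Tendsto (fun i => u i / v i) l (𝓝 0) := by
  rw [tendsto_zero_iff_abs_tendsto_zero]
  refine squeeze_zero' (Eventually.of_forall fun i => abs_nonneg _) ?_
    (by simpa using hu.abs.div_const c)
  filter_upwards [hv] with i hi
  rw [Function.comp_apply, abs_div, abs_of_pos (hc.trans_le hi)]
  exact div_le_div_of_nonneg_left (abs_nonneg _) hc hi

theorem re_dominates_im_of_bounds {ι : Type*} {l : Filter ι} [l.NeBot] {F : ι → ℂ}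
    {δ η ρ : ι → ℝ} {p a b K : ℝ} (hpa : 0 < p * a) (hδ : Tendsto δ l (𝓝 0))
    (hη : Tendsto η l (𝓝 0)) (hρ : Tendsto ρ l (𝓝 1))
    (hF : ∀ᶠ i in l, |(F i).im| ≤ δ i * a + η i * b ∧
      ρ i * p * a - η i * b ≤ (F i).re ∧ (F i).re ≤ K) :
    Tendsto (fun i => (F i).im) l (𝓝 0) ∧ p * a ≤ liminf (fun i => (F i).re) l ∧
    (∀ᶠ i in l, 0 < (F i).re) ∧ Tendsto (fun i => (F i).im / (F i).re) l (𝓝 0) := by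
  have hIm : Tendsto (fun i => (F i).im) l (𝓝 0) := by
    rw [tendsto_zero_iff_abs_tendsto_zero]
    refine squeeze_zero' (Eventually.of_forall fun i => abs_nonneg _)
      (hF.mono fun i hi => hi.1) ?_
    simpa using (hδ.mul_const a).add (hη.mul_const b)
  have hlow : Tendsto (fun i => ρ i * p * a - η i * b) l (𝓝 (p * a)) := by
    simpa using ((hρ.mul_const p).mul_const a).sub (hη.mul_const b)
  have hReHalf : ∀ᶠ i in l, p * a / 2 ≤ (F i).re := by
    filter_upwards [hlow.eventually_const_le (half_lt_self hpa), hF] with i hi hFi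
      using hi.trans hFi.2.1
  exact ⟨hIm, le_liminf_of_tendsto_of_eventually_le hlow (hF.mono fun i hi => hi.2.1)
      (hF.mono fun i hi => hi.2.2), hReHalf.mono fun i hi => (half_pos hpa).trans_le hi,
    tendsto_div_of_tendsto_zero_of_eventually_le (half_pos hpa) hIm hReHalf⟩

theorem stmt_12_general (k : ℕ) (A Atil : Set (Fin k → ℝ))
    (hA : MeasurableSet A) (hAfin : volume A < ⊤)
    (hAtil : MeasurableSet Atil) (hsub : Atil ⊆ A) (hAtilpos : 0 < volume Atil)
    (h₀ M p₀ C ε : ℝ) (hh₀ : 0 < h₀) (hp₀ : 0 < p₀)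
    (hε : 0 < ε)
    (P : (Fin k → ℝ) → ℝ → ℂ)
    (hmeas : ∀ h ∈ Set.Ioo (0 : ℝ) h₀, Measurable (fun a => P a h))
    (hbdd : ∀ a ∈ A, ∀ h ∈ Set.Ioo (0 : ℝ) h₀, ‖P a h‖ ≤ M)
    (hdom : ∀ a ∈ Atil, ∀ h ∈ Set.Ioo (0 : ℝ) h₀,
      p₀ ≤ (P a h).re ∧ |(P a h).im| ≤ C * h ^ ((1 : ℝ) / 2 + ε))
    (hsup : Tendsto (fun h : ℝ => ⨆ a : ↥(A \ Atil), ‖P (↑a) h‖)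
      (𝓝[>] (0 : ℝ)) (𝓝 0))
    (R : ℝ → ℂ)
    (hR : ∀ h, R h = ∫ a in A, Real.exp (-((P a h).im) ^ 2 / h) • P a h) :
    Tendsto (fun h : ℝ => (R h).im) (𝓝[>] (0 : ℝ)) (𝓝 0) ∧
    0 < p₀ * (volume Atil).toReal ∧
    p₀ * (volume Atil).toReal ≤ liminf (fun h : ℝ => (R h).re) (𝓝[>] (0 : ℝ)) ∧
    (∀ᶠ h in 𝓝[>] (0 : ℝ), 0 < (R h).re) ∧
    Tendsto (fun h : ℝ => (R h).im / (R h).re) (𝓝[>] (0 : ℝ)) (𝓝 0) := by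
  set η : ℝ → ℝ := fun h => ⨆ a : ↥(A \ Atil), ‖P (↑a) h‖
  have hη : ∀ h ∈ Set.Ioo (0 : ℝ) h₀, ∀ a ∈ A \ Atil, ‖P a h‖ ≤ η h := fun h hh a ha =>
    le_ciSup (f := fun b : ↥(A \ Atil) => ‖P b h‖)
      ⟨M, by rintro _ ⟨b, rfl⟩; exact hbdd b b.2.1 h hh⟩ ⟨a, ha⟩
  have hpos : 0 < p₀ * volume.real Atil :=
    mul_pos hp₀ (ENNReal.toReal_pos hAtilpos.ne' ((measure_mono hsub).trans_lt hAfin).ne)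
  obtain ⟨hIm, hRe⟩ := re_dominates_im_of_bounds (F := R) hpos
    (tendsto_mul_rpow_nhdsGT_zero C (by positivity : 0 < (1 : ℝ) / 2 + ε)) hsup
    (tendsto_exp_neg_sq_mul_rpow_div_nhdsGT_zero C hε) <| by
      filter_upwards [Ioo_mem_nhdsGT hh₀] with h hh
      rw [hR h]
      exact integral_imDamp_bounds hA hAfin hAtil hsub hh.1 hp₀.le (hmeas h hh)
        (fun a ha => hbdd a ha h hh) (fun a ha => hdom a ha h hh) (hη h hh)
  exact ⟨hIm, hpos, hRe⟩

/-- Real dominance conditions for the robustness function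
`R(h) = ∫_A P(a,h)·exp(-(Im P(a,h))²/h) da`: if `P` satisfies the real dominance
conditions with `|Im P| ≤ C h^{1/2+ε}` on a robust region `Ã` of positive measure
and is uniformly suppressed on `A ∖ Ã`, then `Im R(h) → 0`,
`liminf Re R(h) ≥ p₀·μ(Ã) > 0`, and in particular `Re R(h) > 0` for small `h`
with `Im R(h)/Re R(h) → 0`. -/
theorem stmt_12 (k : ℕ) (A Atil : Set (Fin k → ℝ))
    (hA : MeasurableSet A) (hAfin : volume A < ⊤) (hApos : 0 < volume A)
    (hAtil : MeasurableSet Atil) (hsub : Atil ⊆ A) (hAtilpos : 0 < volume Atil)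
    (h₀ M p₀ C ε : ℝ) (hh₀ : 0 < h₀) (hM : 0 < M) (hp₀ : 0 < p₀)
    (hC : 0 < C) (hε : 0 < ε)
    (P : (Fin k → ℝ) → ℝ → ℂ)
    (hmeas : ∀ h ∈ Set.Ioo (0 : ℝ) h₀, Measurable (fun a => P a h))
    (hbdd : ∀ a ∈ A, ∀ h ∈ Set.Ioo (0 : ℝ) h₀, ‖P a h‖ ≤ M)
    (hdom : ∀ a ∈ Atil, ∀ h ∈ Set.Ioo (0 : ℝ) h₀,
      p₀ ≤ (P a h).re ∧ |(P a h).im| ≤ C * h ^ ((1 : ℝ) / 2 + ε))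
    (hsup : Tendsto (fun h : ℝ => ⨆ a : ↥(A \ Atil), ‖P (↑a) h‖)
      (𝓝[>] (0 : ℝ)) (𝓝 0))
    (R : ℝ → ℂ)
    (hR : ∀ h, R h = ∫ a in A, Real.exp (-((P a h).im) ^ 2 / h) • P a h) :
    Tendsto (fun h : ℝ => (R h).im) (𝓝[>] (0 : ℝ)) (𝓝 0) ∧
    0 < p₀ * (volume Atil).toReal ∧
    p₀ * (volume Atil).toReal ≤ liminf (fun h : ℝ => (R h).re) (𝓝[>] (0 : ℝ)) ∧
    (∀ᶠ h in 𝓝[>] (0 : ℝ), 0 < (R h).re) ∧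
    Tendsto (fun h : ℝ => (R h).im / (R h).re) (𝓝[>] (0 : ℝ)) (𝓝 0) :=
  stmt_12_general k A Atil hA hAfin hAtil hsub hAtilpos h₀ M p₀ C ε hh₀ hp₀ hε P hmeas hbdd hdom
    hsup R hR
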